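/- arXiv:2103.13050 — 2 statements merged into one kernel-verified Lean document; each statement's English description precedes it below -/
import Mathlib

section
/- Gelfand number interpolation in the domain: let 0 < p, q ≤ ∞, θ ∈ [0,1], and 1/p_θ = (1−θ)/q + θ/p. Then for 1 ≤ n ≤ N², c_n(S_{p_θ}^N ↪ S_q^N) ≥ c_n(S_p^N ↪ S_q^N)^{(1/p_θ − 1/q)/(1/p − 1/q)}. -/
open scoped ENNReal

/-- The (unordered) singular values of a real `N × N` matrix `A`:
the square roots of the eigenvalues of `Aᵀ * A`. -/
noncomputable def singularValues (N : ℕ) (A : Matrix (Fin N) (Fin N) ℝ) : Fin N → ℝ :=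
  fun i => Real.sqrt ((Matrix.isHermitian_conjTranspose_mul_self A).eigenvalues i)

/-- The Schatten `p`-(quasi-)norm of a real `N × N` matrix, `0 < p ≤ ∞`. -/
noncomputable def schattenNorm (N : ℕ) (p : ℝ≥0∞) (A : Matrix (Fin N) (Fin N) ℝ) : ℝ :=
  if p = ⊤ then ⨆ i, singularValues N A i
  else (∑ i, singularValues N A i ^ p.toReal) ^ (1 / p.toReal)

/-- The `n`-th approximation number of the natural identity `S_p^N → S_q^N`. -/
noncomputable def approxNumber (N : ℕ) (p q : ℝ≥0∞) (n : ℕ) : ℝ :=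
  sInf {r : ℝ | ∃ T : Matrix (Fin N) (Fin N) ℝ →ₗ[ℝ] Matrix (Fin N) (Fin N) ℝ,
    Module.finrank ℝ (LinearMap.range T) < n ∧
    r = sSup {s : ℝ | ∃ A, schattenNorm N p A ≤ 1 ∧ s = schattenNorm N q (A - T A)}}

/-- The `n`-th Gelfand number of the natural identity `S_p^N → S_q^N`. -/
noncomputable def gelfandNumber (N : ℕ) (p q : ℝ≥0∞) (n : ℕ) : ℝ :=
  sInf {r : ℝ | ∃ F : Submodule ℝ (Matrix (Fin N) (Fin N) ℝ),
    N ^ 2 - Module.finrank ℝ F < n ∧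
    r = sSup {s : ℝ | ∃ A ∈ F, schattenNorm N p A ≤ 1 ∧ s = schattenNorm N q A}}

/-- The `n`-th Kolmogorov number of the natural identity `S_p^N → S_q^N`. -/
noncomputable def kolmogorovNumber (N : ℕ) (p q : ℝ≥0∞) (n : ℕ) : ℝ :=
  sInf {r : ℝ | ∃ E : Submodule ℝ (Matrix (Fin N) (Fin N) ℝ),
    Module.finrank ℝ E < n ∧
    r = sSup {s : ℝ | ∃ A, schattenNorm N p A ≤ 1 ∧
      s = sInf {t : ℝ | ∃ B ∈ E, t = schattenNorm N q (A - B)}}}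

/-!
Littlewood's inequality `‖A‖_{p_θ} ≤ ‖A‖_q^{1-θ} ‖A‖_p^θ` is Hölder's inequality for the singular
values. For `A` in a subspace `F` with `‖A‖_p ≤ 1` it gives `‖A‖_q^θ ≤ ‖A‖_q / ‖A‖_{p_θ}`, so the
norm of `S_p ↪ S_q` restricted to `F` is at most the `θ`-th root of the norm of
`S_{p_θ} ↪ S_q` restricted to `F`. Taking the infimum over `F` gives the claim, as the exponent
`(1/p_θ - 1/q)/(1/p - 1/q)` is `θ`, except when `p_θ = q`: there the exponent is `0` (possibly as
the junk value of `0 / 0`) and the claim is `c_n(S_q ↪ S_q) ≥ 1`.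
-/

open Matrix

lemma ENNReal.eq_of_one_div_toReal_eq {x y : ℝ≥0∞} (hx : x ≠ 0) (hy : y ≠ 0)
    (h : 1 / x.toReal = 1 / y.toReal) : x = y := by
  have := (ENNReal.toReal_eq_toReal_iff x y).mp (by simpa using h)
  tauto

section lpQuasinorm

variable {ι : Type*} [Fintype ι]

/-- The `ℓ_p` quasi-norm of a vector with nonnegative entries (no absolute values are taken). -/
noncomputable def lpQuasinorm (p : ℝ≥0∞) (σ : ι → ℝ) : ℝ :=
  if p = ⊤ then ⨆ i, σ i else (∑ i, σ i ^ p.toReal) ^ (1 / p.toReal)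

variable {σ : ι → ℝ}

lemma lpQuasinorm_nonneg (hσ : 0 ≤ σ) (p : ℝ≥0∞) : 0 ≤ lpQuasinorm p σ := by
  unfold lpQuasinorm
  split_ifs
  · exact Real.iSup_nonneg hσ
  · exact Real.rpow_nonneg (Finset.sum_nonneg fun i _ => Real.rpow_nonneg (hσ i) _) _

lemma le_lpQuasinorm (hσ : 0 ≤ σ) {p : ℝ≥0∞} (hp : p ≠ 0) (i : ι) : σ i ≤ lpQuasinorm p σ := by
  unfold lpQuasinorm
  split_ifs with htop
  · exact le_ciSup (Set.finite_range σ).bddAbove i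
  · have ht : p.toReal ≠ 0 := (ENNReal.toReal_pos hp htop).ne'
    calc σ i = (σ i ^ p.toReal) ^ (1 / p.toReal) := by
          rw [← Real.rpow_mul (hσ i), mul_one_div_cancel ht, Real.rpow_one]
      _ ≤ _ := Real.rpow_le_rpow (Real.rpow_nonneg (hσ i) _)
          (Finset.single_le_sum (fun j _ => Real.rpow_nonneg (hσ j) _) (Finset.mem_univ i))
          (by positivity)

lemma lpQuasinorm_pos (hσ : 0 ≤ σ) {p : ℝ≥0∞} (hp : p ≠ 0) (h : σ ≠ 0) :
    0 < lpQuasinorm p σ := by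
  obtain ⟨i, hi⟩ := Function.ne_iff.mp h
  exact ((hσ i).lt_of_ne' hi).trans_le (le_lpQuasinorm hσ hp i)

lemma lpQuasinorm_smul (hσ : 0 ≤ σ) {p : ℝ≥0∞} (hp : p ≠ 0) {c : ℝ} (hc : 0 ≤ c) :
    lpQuasinorm p (c • σ) = c * lpQuasinorm p σ := by
  unfold lpQuasinorm
  split_ifs with htop
  · exact (Real.mul_iSup_of_nonneg hc σ).symm
  · have ht : p.toReal ≠ 0 := (ENNReal.toReal_pos hp htop).ne'
    simp_rw [Pi.smul_apply, smul_eq_mul, Real.mul_rpow hc (hσ _), ← Finset.mul_sum]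
    rw [Real.mul_rpow (by positivity) (Finset.sum_nonneg fun i _ => Real.rpow_nonneg (hσ i) _),
      ← Real.rpow_mul hc, mul_one_div_cancel ht, Real.rpow_one]

lemma lpQuasinorm_le_card_rpow (hσ : 0 ≤ σ) (hσ1 : ∀ i, σ i ≤ 1) (p : ℝ≥0∞) :
    lpQuasinorm p σ ≤ (Fintype.card ι : ℝ) ^ (1 / p.toReal) := by
  unfold lpQuasinorm
  split_ifs with htop
  · simpa [htop] using Real.iSup_le hσ1 zero_le_one
  · refine Real.rpow_le_rpow (Finset.sum_nonneg fun i _ => Real.rpow_nonneg (hσ i) _) ?_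
      (by positivity)
    calc ∑ i, σ i ^ p.toReal ≤ ∑ _i : ι, (1 : ℝ) :=
          Finset.sum_le_sum fun i _ => Real.rpow_le_one (hσ i) (hσ1 i) ENNReal.toReal_nonneg
      _ = Fintype.card ι := by simp

/-- Hölder's inequality with exponents `a / (1 - θ)` and `b / θ`, applied to
`σ = σ ^ (1 - θ) * σ ^ θ`. -/
lemma rpow_sum_rpow_le_rpow_mul_rpow (hσ : 0 ≤ σ) {a b t θ : ℝ} (ha : 0 < a) (hb : 0 < b)
    (hθ0 : 0 < θ) (hθ1 : θ < 1) (hmean : 1 / t = (1 - θ) / a + θ / b) :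
    (∑ i, σ i ^ t) ^ (1 / t)
      ≤ ((∑ i, σ i ^ a) ^ (1 / a)) ^ (1 - θ) * ((∑ i, σ i ^ b) ^ (1 / b)) ^ θ := by
  have hθ1' : 0 < 1 - θ := sub_pos.mpr hθ1
  have ht : 0 < t := one_div_pos.mp (by rw [hmean]; positivity)
  have hT : (a / (1 - θ)).HolderTriple (b / θ) t :=
    ⟨by rw [inv_div, inv_div, ← one_div t, hmean], div_pos ha hθ1', div_pos hb hθ0⟩
  have holder := Real.Lr_rpow_le_Lp_mul_Lq_of_nonneg Finset.univ hT
    (f := fun i => σ i ^ (1 - θ)) (g := fun i => σ i ^ θ)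
    (fun i _ => Real.rpow_nonneg (hσ i) _) (fun i _ => Real.rpow_nonneg (hσ i) _)
  have hsplit (i : ι) : σ i ^ (1 - θ) * σ i ^ θ = σ i := by
    rw [← Real.rpow_add' (hσ i) (by norm_num), sub_add_cancel, Real.rpow_one]
  have hpow {c d : ℝ} (hd : d ≠ 0) (i : ι) : (σ i ^ d) ^ (c / d) = σ i ^ c := by
    rw [← Real.rpow_mul (hσ i), mul_div_cancel₀ _ hd]
  simp only [hsplit, hpow hθ1'.ne', hpow hθ0.ne'] at holder
  have hSa : 0 ≤ ∑ i, σ i ^ a := Finset.sum_nonneg fun i _ => Real.rpow_nonneg (hσ i) _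
  have hSb : 0 ≤ ∑ i, σ i ^ b := Finset.sum_nonneg fun i _ => Real.rpow_nonneg (hσ i) _
  calc (∑ i, σ i ^ t) ^ (1 / t)
      ≤ ((∑ i, σ i ^ a) ^ (t / (a / (1 - θ))) * (∑ i, σ i ^ b) ^ (t / (b / θ))) ^ (1 / t) :=
        Real.rpow_le_rpow (Finset.sum_nonneg fun i _ => Real.rpow_nonneg (hσ i) _) holder
          (by positivity)
    _ = _ := by
        rw [Real.mul_rpow (by positivity) (by positivity), ← Real.rpow_mul hSa,
          ← Real.rpow_mul hSb, ← Real.rpow_mul hSa, ← Real.rpow_mul hSb]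
        congr 2 <;> field_simp

lemma rpow_sum_rpow_le_iSup_rpow_mul_rpow (hσ : 0 ≤ σ) {b t θ : ℝ} (hb : 0 < b) (hθ0 : 0 < θ)
    (hθ1 : θ ≤ 1) (hmean : 1 / t = θ / b) :
    (∑ i, σ i ^ t) ^ (1 / t) ≤ (⨆ i, σ i) ^ (1 - θ) * ((∑ i, σ i ^ b) ^ (1 / b)) ^ θ := by
  have ht : t = b / θ := by rw [← one_div_div, ← hmean, one_div_one_div]
  have ht0 : 0 < t := by rw [ht]; positivity
  have hbt : b ≤ t := by rw [ht, le_div_iff₀ hθ0]; nlinarith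
  have hM : 0 ≤ ⨆ i, σ i := Real.iSup_nonneg hσ
  have hSb : 0 ≤ ∑ i, σ i ^ b := Finset.sum_nonneg fun i _ => Real.rpow_nonneg (hσ i) _
  have hsum : ∑ i, σ i ^ t ≤ (⨆ i, σ i) ^ (t - b) * ∑ i, σ i ^ b := by
    rw [Finset.mul_sum]
    refine Finset.sum_le_sum fun i _ => ?_
    rw [← sub_add_cancel t b, Real.rpow_add' (hσ i) (by linarith), add_sub_cancel_right]
    exact mul_le_mul_of_nonneg_right (Real.rpow_le_rpow (hσ i)
      (le_ciSup (Set.finite_range σ).bddAbove i) (sub_nonneg.mpr hbt)) (Real.rpow_nonneg (hσ i) _)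
  calc (∑ i, σ i ^ t) ^ (1 / t)
      ≤ ((⨆ i, σ i) ^ (t - b) * ∑ i, σ i ^ b) ^ (1 / t) :=
        Real.rpow_le_rpow (Finset.sum_nonneg fun i _ => Real.rpow_nonneg (hσ i) _) hsum
          (by positivity)
    _ = _ := by
        rw [Real.mul_rpow (Real.rpow_nonneg hM _) hSb, ← Real.rpow_mul hM, ← Real.rpow_mul hSb, ht]
        congr 2 <;> field_simp

theorem lpQuasinorm_le_rpow_mul_rpow (hσ : 0 ≤ σ) {p q r : ℝ≥0∞} (hp : p ≠ 0) (hq : q ≠ 0)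
    (hr : r ≠ 0) {θ : ℝ} (hθ0 : 0 ≤ θ) (hθ1 : θ ≤ 1)
    (hmean : 1 / r.toReal = (1 - θ) / q.toReal + θ / p.toReal) :
    lpQuasinorm r σ ≤ lpQuasinorm q σ ^ (1 - θ) * lpQuasinorm p σ ^ θ := by
  rcases hθ0.eq_or_lt with rfl | hθ0
  · obtain rfl : r = q := ENNReal.eq_of_one_div_toReal_eq hr hq (by simpa using hmean)
    simp
  rcases hθ1.eq_or_lt with rfl | hθ1
  · obtain rfl : r = p := ENNReal.eq_of_one_div_toReal_eq hr hp (by simpa using hmean)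
    simp
  have hr_ne_top (hpos : 0 < 1 / r.toReal) : r ≠ ⊤ :=
    (ENNReal.toReal_pos_iff.mp (one_div_pos.mp hpos)).2.ne
  by_cases hqt : q = ⊤ <;> by_cases hpt : p = ⊤
  · have hrt : r = ⊤ := by
      simpa [hqt, hpt, ENNReal.toReal_eq_zero_iff, hr] using hmean
    have hM : 0 ≤ ⨆ i, σ i := Real.iSup_nonneg hσ
    simp only [lpQuasinorm, hrt, hqt, hpt, if_true]
    rw [← Real.rpow_add' hM (by norm_num), sub_add_cancel, Real.rpow_one]
  · have hp' : 0 < p.toReal := ENNReal.toReal_pos hp hpt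
    simp only [hqt, ENNReal.toReal_top, div_zero, zero_add] at hmean
    have hrt := hr_ne_top (by rw [hmean]; positivity)
    simp only [lpQuasinorm, hrt, hqt, hpt, if_true, if_false]
    exact rpow_sum_rpow_le_iSup_rpow_mul_rpow hσ hp' hθ0 hθ1.le hmean
  · have hq' : 0 < q.toReal := ENNReal.toReal_pos hq hqt
    simp only [hpt, ENNReal.toReal_top, div_zero, add_zero] at hmean
    have hrt := hr_ne_top (by rw [hmean]; have := sub_pos.mpr hθ1; positivity)
    simp only [lpQuasinorm, hrt, hqt, hpt, if_true, if_false]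
    rw [mul_comm]
    simpa using rpow_sum_rpow_le_iSup_rpow_mul_rpow hσ hq' (sub_pos.mpr hθ1) (by linarith) hmean
  · have hp' : 0 < p.toReal := ENNReal.toReal_pos hp hpt
    have hq' : 0 < q.toReal := ENNReal.toReal_pos hq hqt
    have hrt := hr_ne_top (by rw [hmean]; have := sub_pos.mpr hθ1; positivity)
    simp only [lpQuasinorm, hrt, hqt, hpt, if_false]
    exact rpow_sum_rpow_le_rpow_mul_rpow hσ hq' hp' hθ0 hθ1 hmean

end lpQuasinorm

section Eigenvalues

variable {n : Type*} [Fintype n] [DecidableEq n] {M : Matrix n n ℝ}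

lemma Matrix.IsHermitian.roots_charpoly_smul (hM : M.IsHermitian) (c : ℝ) :
    (c • M).charpoly.roots = Multiset.map (c • hM.eigenvalues) Finset.univ.val := by
  have hcharpoly :
      (c • M).charpoly = ∏ i, (Polynomial.X - Polynomial.C (c * hM.eigenvalues i)) := by
    conv_lhs => rw [hM.spectral_theorem, Unitary.conjStarAlgAut_apply, ← Matrix.smul_mul,
      ← Matrix.mul_smul, charpoly_mul_comm, ← mul_assoc]
    simp [← diagonal_smul, charpoly_diagonal]
  rw [hcharpoly, Polynomial.roots_prod _ _
    (Finset.prod_ne_zero_iff.mpr fun i _ => Polynomial.X_sub_C_ne_zero _)]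
  simp only [Polynomial.roots_X_sub_C, Multiset.bind_singleton]
  rfl

/-- Scaling by `c ≥ 0` preserves the decreasing order in which `eigenvalues₀` lists the
eigenvalues, so it scales them pointwise and not merely as a multiset. -/
lemma Matrix.IsHermitian.eigenvalues_eq_smul (hM : M.IsHermitian) {c : ℝ} (hc : 0 ≤ c)
    {M' : Matrix n n ℝ} (hM' : M'.IsHermitian) (hM'M : M' = c • M) :
    hM'.eigenvalues = c • hM.eigenvalues := by
  subst hM'M
  suffices hM'.eigenvalues₀ = c • hM.eigenvalues₀ by
    ext i; simp [IsHermitian.eigenvalues, this]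
  rw [← List.ofFn_inj]
  refine List.Perm.eq_of_sortedGE hM'.eigenvalues₀_antitone.sortedGE_ofFn
    (hM.eigenvalues₀_antitone.const_smul hc).sortedGE_ofFn ?_
  rw [← Multiset.coe_eq_coe, ← Fin.univ_val_map, ← Fin.univ_val_map]
  have h₀ := hM.roots_charpoly_eq_eigenvalues.symm.trans hM.roots_charpoly_eq_eigenvalues₀
  have h' := hM'.roots_charpoly_eq_eigenvalues₀
  rw [hM.roots_charpoly_smul] at h'
  simp only [RCLike.ofReal_real_eq_id, Function.id_comp] at h' h₀
  rw [← h']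
  simpa [Multiset.map_map, Function.comp_def] using congrArg (Multiset.map (c • ·)) h₀

end Eigenvalues

section Schatten

variable {N : ℕ}

lemma singularValues_nonneg (A : Matrix (Fin N) (Fin N) ℝ) : 0 ≤ singularValues N A :=
  fun _ => Real.sqrt_nonneg _

lemma singularValues_smul (A : Matrix (Fin N) (Fin N) ℝ) {c : ℝ} (hc : 0 ≤ c) :
    singularValues N (c • A) = c • singularValues N A := by
  have hM := isHermitian_conjTranspose_mul_self A
  have heig := hM.eigenvalues_eq_smul (sq_nonneg c) (isHermitian_conjTranspose_mul_self (c • A))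
    (by rw [conjTranspose_smul, star_trivial, Matrix.smul_mul, Matrix.mul_smul, smul_smul, sq])
  ext i
  simp only [singularValues, heig, Pi.smul_apply, smul_eq_mul]
  rw [Real.sqrt_mul (sq_nonneg c), Real.sqrt_sq hc]

lemma singularValues_ne_zero {A : Matrix (Fin N) (Fin N) ℝ} (hA : A ≠ 0) :
    singularValues N A ≠ 0 := by
  intro h
  have hM := isHermitian_conjTranspose_mul_self A
  have heig : hM.eigenvalues = 0 := funext fun i =>
    le_antisymm (Real.sqrt_eq_zero'.mp (congrFun h i))
      (eigenvalues_conjTranspose_mul_self_nonneg A i)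
  exact hA (conjTranspose_mul_self_eq_zero.mp (hM.eigenvalues_eq_zero_iff.mp heig))

lemma schattenNorm_eq_lpQuasinorm (p : ℝ≥0∞) (A : Matrix (Fin N) (Fin N) ℝ) :
    schattenNorm N p A = lpQuasinorm p (singularValues N A) := rfl

lemma schattenNorm_nonneg (p : ℝ≥0∞) (A : Matrix (Fin N) (Fin N) ℝ) : 0 ≤ schattenNorm N p A :=
  lpQuasinorm_nonneg (singularValues_nonneg A) p

lemma schattenNorm_pos {p : ℝ≥0∞} (hp : p ≠ 0) {A : Matrix (Fin N) (Fin N) ℝ} (hA : A ≠ 0) :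
    0 < schattenNorm N p A :=
  lpQuasinorm_pos (singularValues_nonneg A) hp (singularValues_ne_zero hA)

lemma schattenNorm_smul {p : ℝ≥0∞} (hp : p ≠ 0) (A : Matrix (Fin N) (Fin N) ℝ) {c : ℝ}
    (hc : 0 ≤ c) : schattenNorm N p (c • A) = c * schattenNorm N p A := by
  rw [schattenNorm_eq_lpQuasinorm, singularValues_smul A hc,
    lpQuasinorm_smul (singularValues_nonneg A) hp hc, schattenNorm_eq_lpQuasinorm]

lemma schattenNorm_zero {p : ℝ≥0∞} (hp : p ≠ 0) :
    schattenNorm N p (0 : Matrix (Fin N) (Fin N) ℝ) = 0 := by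
  simpa using schattenNorm_smul hp (0 : Matrix (Fin N) (Fin N) ℝ) le_rfl

lemma schattenNorm_le_of_schattenNorm_le_one {p : ℝ≥0∞} (hp : p ≠ 0)
    {A : Matrix (Fin N) (Fin N) ℝ} (hA : schattenNorm N p A ≤ 1) (q : ℝ≥0∞) :
    schattenNorm N q A ≤ (N : ℝ) ^ (1 / q.toReal) := by
  simpa [schattenNorm_eq_lpQuasinorm] using lpQuasinorm_le_card_rpow (singularValues_nonneg A)
    (fun i => (le_lpQuasinorm (singularValues_nonneg A) hp i).trans hA) q

theorem schattenNorm_le_rpow_mul_rpow {p q r : ℝ≥0∞} (hp : p ≠ 0) (hq : q ≠ 0) (hr : r ≠ 0)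
    {θ : ℝ} (hθ0 : 0 ≤ θ) (hθ1 : θ ≤ 1)
    (hmean : 1 / r.toReal = (1 - θ) / q.toReal + θ / p.toReal) (A : Matrix (Fin N) (Fin N) ℝ) :
    schattenNorm N r A ≤ schattenNorm N q A ^ (1 - θ) * schattenNorm N p A ^ θ :=
  lpQuasinorm_le_rpow_mul_rpow (singularValues_nonneg A) hp hq hr hθ0 hθ1 hmean

end Schatten

section RestrictionNorm

/-- `‖S_p^N ↪ S_q^N‖` restricted to `F`, the quantity minimised in `gelfandNumber`. -/
noncomputable def restrictionNorm (N : ℕ) (p q : ℝ≥0∞)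
    (F : Submodule ℝ (Matrix (Fin N) (Fin N) ℝ)) : ℝ :=
  sSup {s : ℝ | ∃ A ∈ F, schattenNorm N p A ≤ 1 ∧ s = schattenNorm N q A}

lemma gelfandNumber_eq_sInf (N : ℕ) (p q : ℝ≥0∞) (n : ℕ) :
    gelfandNumber N p q n = sInf {r : ℝ | ∃ F : Submodule ℝ (Matrix (Fin N) (Fin N) ℝ),
      N ^ 2 - Module.finrank ℝ F < n ∧ r = restrictionNorm N p q F} := rfl

variable {N : ℕ} {p q : ℝ≥0∞}

lemma restrictionNorm_nonneg (F : Submodule ℝ (Matrix (Fin N) (Fin N) ℝ)) :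
    0 ≤ restrictionNorm N p q F :=
  Real.sSup_nonneg <| by
    rintro _ ⟨A, -, -, rfl⟩
    exact schattenNorm_nonneg q A

lemma schattenNorm_le_restrictionNorm_mul (hp : p ≠ 0) (hq : q ≠ 0)
    {F : Submodule ℝ (Matrix (Fin N) (Fin N) ℝ)} {A : Matrix (Fin N) (Fin N) ℝ} (hA : A ∈ F) :
    schattenNorm N q A ≤ restrictionNorm N p q F * schattenNorm N p A := by
  rcases eq_or_ne A 0 with rfl | hA0
  · simp [schattenNorm_zero hq, schattenNorm_zero hp]
  have hpos := schattenNorm_pos hp hA0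
  have hbdd : BddAbove {s : ℝ | ∃ A ∈ F, schattenNorm N p A ≤ 1 ∧ s = schattenNorm N q A} := by
    refine ⟨(N : ℝ) ^ (1 / q.toReal), ?_⟩
    rintro _ ⟨B, -, hB, rfl⟩
    exact schattenNorm_le_of_schattenNorm_le_one hp hB q
  have hnormalized : (schattenNorm N p A)⁻¹ * schattenNorm N q A ≤ restrictionNorm N p q F := by
    refine le_csSup hbdd ⟨(schattenNorm N p A)⁻¹ • A, F.smul_mem _ hA, ?_, ?_⟩
    · rw [schattenNorm_smul hp _ (inv_nonneg.mpr hpos.le), inv_mul_cancel₀ hpos.ne']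
    · rw [schattenNorm_smul hq _ (inv_nonneg.mpr hpos.le)]
  rwa [inv_mul_le_iff₀ hpos, mul_comm] at hnormalized

lemma one_le_restrictionNorm_self (hq : q ≠ 0) {F : Submodule ℝ (Matrix (Fin N) (Fin N) ℝ)}
    (hF : F ≠ ⊥) : 1 ≤ restrictionNorm N q q F := by
  obtain ⟨A, hA, hA0⟩ := Submodule.exists_mem_ne_zero_of_ne_bot hF
  exact (le_mul_iff_one_le_left (schattenNorm_pos hq hA0)).mp
    (schattenNorm_le_restrictionNorm_mul hq hq hA)

/-- Littlewood's inequality turns `‖A‖_q ≤ S ‖A‖_{p_θ}` into `‖A‖_q ≤ S ‖A‖_q ^ (1 - θ)`. -/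
lemma schattenNorm_rpow_le_restrictionNorm {pθ : ℝ≥0∞} (hp : p ≠ 0) (hq : q ≠ 0)
    (hpθ : pθ ≠ 0) {θ : ℝ} (hθ0 : 0 < θ) (hθ1 : θ ≤ 1)
    (hmean : 1 / pθ.toReal = (1 - θ) / q.toReal + θ / p.toReal)
    {F : Submodule ℝ (Matrix (Fin N) (Fin N) ℝ)} {A : Matrix (Fin N) (Fin N) ℝ} (hA : A ∈ F)
    (hA1 : schattenNorm N p A ≤ 1) :
    schattenNorm N q A ^ θ ≤ restrictionNorm N pθ q F := by
  set S := restrictionNorm N pθ q F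
  rcases (schattenNorm_nonneg q A).eq_or_lt with hA0 | hApos
  · rw [← hA0, Real.zero_rpow hθ0.ne']
    exact restrictionNorm_nonneg F
  have hp1 : schattenNorm N p A ^ θ ≤ 1 :=
    Real.rpow_le_one (schattenNorm_nonneg p A) hA1 hθ0.le
  have hbound : schattenNorm N q A ^ θ * schattenNorm N q A ^ (1 - θ)
      ≤ S * schattenNorm N q A ^ (1 - θ) :=
    calc schattenNorm N q A ^ θ * schattenNorm N q A ^ (1 - θ)
        = schattenNorm N q A := by
          rw [← Real.rpow_add hApos, add_sub_cancel, Real.rpow_one]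
      _ ≤ S * schattenNorm N pθ A := schattenNorm_le_restrictionNorm_mul hpθ hq hA
      _ ≤ S * (schattenNorm N q A ^ (1 - θ) * schattenNorm N p A ^ θ) :=
          mul_le_mul_of_nonneg_left
            (schattenNorm_le_rpow_mul_rpow hp hq hpθ hθ0.le hθ1 hmean A)
            (restrictionNorm_nonneg F)
      _ ≤ S * schattenNorm N q A ^ (1 - θ) := by
          gcongr
          · exact restrictionNorm_nonneg F
          · exact mul_le_of_le_one_right (Real.rpow_nonneg hApos.le _) hp1
  exact le_of_mul_le_mul_right hbound (Real.rpow_pos_of_pos hApos _)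

lemma restrictionNorm_rpow_le {pθ : ℝ≥0∞} (hp : p ≠ 0) (hq : q ≠ 0) (hpθ : pθ ≠ 0) {θ : ℝ}
    (hθ0 : 0 < θ) (hθ1 : θ ≤ 1) (hmean : 1 / pθ.toReal = (1 - θ) / q.toReal + θ / p.toReal)
    (F : Submodule ℝ (Matrix (Fin N) (Fin N) ℝ)) :
    restrictionNorm N p q F ^ θ ≤ restrictionNorm N pθ q F := by
  have hS := restrictionNorm_nonneg (p := pθ) (q := q) F
  suffices restrictionNorm N p q F ≤ restrictionNorm N pθ q F ^ θ⁻¹ by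
    calc restrictionNorm N p q F ^ θ ≤ (restrictionNorm N pθ q F ^ θ⁻¹) ^ θ :=
          Real.rpow_le_rpow (restrictionNorm_nonneg F) this hθ0.le
      _ = restrictionNorm N pθ q F := Real.rpow_inv_rpow hS hθ0.ne'
  refine Real.sSup_le ?_ (Real.rpow_nonneg hS _)
  rintro _ ⟨A, hA, hA1, rfl⟩
  exact (Real.le_rpow_inv_iff_of_pos (schattenNorm_nonneg q A) hS hθ0).mpr
    (schattenNorm_rpow_le_restrictionNorm hp hq hpθ hθ0 hθ1 hmean hA hA1)

lemma rpow_gelfandNumber_le {p' q' : ℝ≥0∞} {n : ℕ} (hn : 1 ≤ n) {α : ℝ} (hα : 0 ≤ α)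
    (h : ∀ F : Submodule ℝ (Matrix (Fin N) (Fin N) ℝ), N ^ 2 - Module.finrank ℝ F < n →
      restrictionNorm N p q F ^ α ≤ restrictionNorm N p' q' F) :
    gelfandNumber N p q n ^ α ≤ gelfandNumber N p' q' n := by
  have hnonneg : ∀ r ∈ {r : ℝ | ∃ F : Submodule ℝ (Matrix (Fin N) (Fin N) ℝ),
      N ^ 2 - Module.finrank ℝ F < n ∧ r = restrictionNorm N p q F}, 0 ≤ r := by
    rintro _ ⟨F, -, rfl⟩
    exact restrictionNorm_nonneg F
  rw [gelfandNumber_eq_sInf, gelfandNumber_eq_sInf]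
  refine le_csInf ⟨_, ⊤, by simp [Module.finrank_matrix, sq]; omega, rfl⟩ ?_
  rintro _ ⟨F, hF, rfl⟩
  calc _ ≤ restrictionNorm N p q F ^ α :=
        Real.rpow_le_rpow (Real.sInf_nonneg hnonneg) (csInf_le ⟨0, hnonneg⟩ ⟨F, hF, rfl⟩) hα
    _ ≤ _ := h F hF

end RestrictionNorm

/-- **Gelfand number interpolation in the domain.** Let `0 < p, q ≤ ∞`, `θ ∈ [0,1]`,
and `1/p_θ = (1-θ)/q + θ/p`. Then for `1 ≤ n ≤ N²`,
`c_n(S_{p_θ}^N ↪ S_q^N) ≥ c_n(S_p^N ↪ S_q^N)^((1/p_θ - 1/q)/(1/p - 1/q))`. -/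
theorem gelfand_interpolation_domain (N : ℕ) (p q pθ : ℝ≥0∞)
    (hp : 0 < p) (hq : 0 < q) (hpθ : 0 < pθ)
    (θ : ℝ) (hθ0 : 0 ≤ θ) (hθ1 : θ ≤ 1)
    (hmean : 1 / pθ.toReal = (1 - θ) / q.toReal + θ / p.toReal)
    (n : ℕ) (hn1 : 1 ≤ n) (hn2 : n ≤ N ^ 2) :
    gelfandNumber N p q n
        ^ ((1 / pθ.toReal - 1 / q.toReal) / (1 / p.toReal - 1 / q.toReal))
      ≤ gelfandNumber N pθ q n := by
  rcases eq_or_ne (1 / pθ.toReal) (1 / q.toReal) with hpθq | hpθq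
  · obtain rfl : pθ = q := ENNReal.eq_of_one_div_toReal_eq hpθ.ne' hq.ne' hpθq
    rw [sub_self, zero_div]
    refine rpow_gelfandNumber_le hn1 le_rfl fun F hF => ?_
    rw [Real.rpow_zero]
    refine one_le_restrictionNorm_self hq.ne' ?_
    rintro rfl
    simp only [finrank_bot, tsub_zero] at hF
    omega
  have hnum : 1 / pθ.toReal - 1 / q.toReal = θ * (1 / p.toReal - 1 / q.toReal) := by
    rw [hmean]; ring
  have hne : θ * (1 / p.toReal - 1 / q.toReal) ≠ 0 := hnum ▸ sub_ne_zero.mpr hpθq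
  rw [hnum, mul_div_cancel_right₀ _ (right_ne_zero_of_mul hne)]
  have hθ : 0 < θ := hθ0.lt_of_ne' (left_ne_zero_of_mul hne)
  exact rpow_gelfandNumber_le hn1 hθ.le fun F _ =>
    restrictionNorm_rpow_le hp.ne' hq.ne' hpθ.ne' hθ hθ1 hmean F
end

section
/- Lower bound for Gelfand numbers via factorization through Hilbert space (quasi-Banach version): let X, Y be m-dimensional quasi-Banach spaces, T : X → Y an invertible linear operator, and suppose T^{-1} = B∘A with A : Y → ℓ₂^m and B : ℓ₂^m → X bounded. Then for all n ≤ m, c_n(T) ≥ (1/(‖A‖‖B‖)) · inf{ d(E, ℓ₂^{m−n+1}) : E ⊂ Y, dim E = m−n+1 }, where d denotes the Banach–Mazur distance. -/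
/-!
Let `F ⊆ X` have codimension `< n`, so `dim F ≥ k := m - n + 1`, and pick `F₀ ⊆ F` with
`dim F₀ = k`; put `E = T F₀`. Since `T⁻¹ = B A`, the map `A` is injective, so `A|_E`, followed by
an isometry of its range onto `ℓ₂^k`, is an isomorphism `φ : E → ℓ₂^k` with `‖φ‖ ≤ ‖A‖`. If
`y = T x ∈ E` and `‖A y‖ ≤ 1`, then `‖x‖ = ‖B A y‖ ≤ ‖B‖`, hence `‖y‖ ≤ ‖T|_F‖ ‖B‖`; so
`d(E, ℓ₂^k) ≤ ‖A‖ ‖B‖ ‖T|_F‖`. Finite suprema for quasi-norms come from finite dimensionality: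
any quasi-norm on `ℝ^d` is bounded above and below by multiples of the sup norm, the lower bound
by compactness of the unit sphere.
-/


/-- A quasi-norm on a real vector space `X`, with modulus of concavity `C`. -/
structure QuasiNorm (X : Type*) [AddCommGroup X] [Module ℝ X] where
  toFun : X → ℝ
  C : ℝ
  one_le_C : 1 ≤ C
  nonneg : ∀ x, 0 ≤ toFun x
  eq_zero_iff : ∀ x, toFun x = 0 ↔ x = 0
  smul : ∀ (a : ℝ) (x : X), toFun (a • x) = |a| * toFun x
  triangle : ∀ x y, toFun (x + y) ≤ C * (toFun x + toFun y)

/-- Operator "norm" of a map between spaces with given (quasi-)norm functions. -/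
noncomputable def opN {X Y : Type*} (nX : X → ℝ) (nY : Y → ℝ) (T : X → Y) : ℝ :=
  sSup {r : ℝ | ∃ x, nX x ≤ 1 ∧ r = nY (T x)}

/-- The `n`-th Gelfand number of a linear map between quasi-normed spaces. -/
noncomputable def gelfandN {X Y : Type*} [AddCommGroup X] [Module ℝ X]
    [AddCommGroup Y] [Module ℝ Y]
    (nX : X → ℝ) (nY : Y → ℝ) (T : X →ₗ[ℝ] Y) (n : ℕ) : ℝ :=
  sInf {r : ℝ | ∃ F : Submodule ℝ X,
    Module.finrank ℝ X - Module.finrank ℝ F < n ∧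
    r = sSup {s : ℝ | ∃ x ∈ F, nX x ≤ 1 ∧ s = nY (T x)}}

/-- The Banach–Mazur distance of a quasi-normed space `Z` to `ℓ₂^k`. -/
noncomputable def distToEuclidean {Z : Type*} [AddCommGroup Z] [Module ℝ Z]
    (nZ : Z → ℝ) (k : ℕ) : ℝ :=
  sInf {r : ℝ | ∃ φ : Z ≃ₗ[ℝ] EuclideanSpace ℝ (Fin k),
    r = opN nZ (fun v => ‖v‖) φ * opN (fun v : EuclideanSpace ℝ (Fin k) => ‖v‖) nZ φ.symm}

open Filter Topology

namespace QuasiNorm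

variable {X Y : Type*} [AddCommGroup X] [Module ℝ X] [AddCommGroup Y] [Module ℝ Y]

theorem map_zero (q : QuasiNorm X) : q.toFun 0 = 0 := (q.eq_zero_iff 0).mpr rfl

theorem C_pos (q : QuasiNorm X) : 0 < q.C := one_pos.trans_le q.one_le_C

noncomputable def comap (q : QuasiNorm Y) (f : X →ₗ[ℝ] Y) (hf : Function.Injective f) :
    QuasiNorm X where
  toFun x := q.toFun (f x)
  C := q.C
  one_le_C := q.one_le_C
  nonneg _ := q.nonneg _
  eq_zero_iff x := by rw [q.eq_zero_iff, map_eq_zero_iff f hf]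
  smul a x := by rw [f.map_smul, q.smul]
  triangle x y := by rw [f.map_add]; exact q.triangle _ _

theorem sum_le (q : QuasiNorm X) {ι : Type*} (s : Finset ι) (g : ι → X) :
    q.toFun (∑ i ∈ s, g i) ≤ q.C ^ s.card * ∑ i ∈ s, q.toFun (g i) := by
  classical
  induction s using Finset.induction_on with
  | empty => simp [q.map_zero]
  | @insert a s ha ih =>
    rw [Finset.sum_insert ha, Finset.sum_insert ha, Finset.card_insert_of_notMem ha]
    have hC := q.C_pos
    calc q.toFun (g a + ∑ i ∈ s, g i)
        ≤ q.C * (q.toFun (g a) + q.toFun (∑ i ∈ s, g i)) := q.triangle _ _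
      _ ≤ q.C * (q.C ^ s.card * q.toFun (g a) + q.C ^ s.card * ∑ i ∈ s, q.toFun (g i)) := by
        gcongr
        exact le_mul_of_one_le_left (q.nonneg _) (one_le_pow₀ q.one_le_C)
      _ = q.C ^ (s.card + 1) * (q.toFun (g a) + ∑ i ∈ s, q.toFun (g i)) := by ring

section Coordinates

variable {ι : Type*} [Fintype ι]

theorem exists_le_mul_norm (q : QuasiNorm (ι → ℝ)) :
    ∃ K, 0 ≤ K ∧ ∀ v, q.toFun v ≤ K * ‖v‖ := by
  classical
  have hC := q.C_pos
  have hq : 0 ≤ ∑ i, q.toFun (Pi.single i 1) := Finset.sum_nonneg fun i _ => q.nonneg _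
  refine ⟨q.C ^ Fintype.card ι * ∑ i, q.toFun (Pi.single i 1), by positivity, fun v => ?_⟩
  have hv : v = ∑ i, v i • Pi.single i (1 : ℝ) := by
    simp_rw [← Pi.single_smul', smul_eq_mul, mul_one, Finset.univ_sum_single]
  calc q.toFun v = q.toFun (∑ i, v i • Pi.single i (1 : ℝ)) := congrArg _ hv
    _ ≤ q.C ^ Fintype.card ι * ∑ i, q.toFun (v i • Pi.single i 1) := q.sum_le _ _
    _ = q.C ^ Fintype.card ι * ∑ i, |v i| * q.toFun (Pi.single i 1) := by simp only [q.smul]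
    _ ≤ q.C ^ Fintype.card ι * ∑ i, ‖v‖ * q.toFun (Pi.single i 1) := by
        gcongr with i
        · exact q.nonneg _
        · exact norm_le_pi_norm v i
    _ = (q.C ^ Fintype.card ι * ∑ i, q.toFun (Pi.single i 1)) * ‖v‖ := by
        rw [← Finset.mul_sum]; ring

theorem eq_zero_of_tendsto (q : QuasiNorm (ι → ℝ)) {K : ℝ} (hK : ∀ v, q.toFun v ≤ K * ‖v‖)
    {α : Type*} {l : Filter α} [l.NeBot] {u : α → ι → ℝ} {x : ι → ℝ} (hux : Tendsto u l (𝓝 x))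
    (hqu : Tendsto (fun j => q.toFun (u j)) l (𝓝 0)) : x = 0 := by
  have hbound : ∀ j, q.toFun x ≤ q.C * (q.toFun (u j) + K * ‖x - u j‖) := fun j => by
    calc q.toFun x = q.toFun (u j + (x - u j)) := by rw [add_sub_cancel]
      _ ≤ q.C * (q.toFun (u j) + q.toFun (x - u j)) := q.triangle _ _
      _ ≤ q.C * (q.toFun (u j) + K * ‖x - u j‖) := by have := q.C_pos; gcongr; exact hK _
  have hlim : Tendsto (fun j => q.C * (q.toFun (u j) + K * ‖x - u j‖)) l (𝓝 0) := by
    have hdist : Tendsto (fun j => ‖x - u j‖) l (𝓝 0) := by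
      simpa [norm_sub_rev] using tendsto_iff_norm_sub_tendsto_zero.mp hux
    simpa using (hqu.add (hdist.const_mul K)).const_mul q.C
  exact (q.eq_zero_iff x).mp <| le_antisymm (ge_of_tendsto' hlim hbound) (q.nonneg x)

theorem exists_pos_mul_norm_le (q : QuasiNorm (ι → ℝ)) :
    ∃ δ > 0, ∀ v, δ * ‖v‖ ≤ q.toFun v := by
  suffices ∃ δ > 0, ∀ v, ‖v‖ = 1 → δ ≤ q.toFun v by
    obtain ⟨δ, hδ, h⟩ := this
    refine ⟨δ, hδ, fun v => ?_⟩
    rcases eq_or_ne v 0 with rfl | hv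
    · simp [q.map_zero]
    · have hnorm := norm_pos_iff.mpr hv
      have := h (‖v‖⁻¹ • v) (norm_smul_inv_norm (𝕜 := ℝ) hv)
      rwa [q.smul, abs_of_pos (inv_pos.mpr hnorm), le_inv_mul_iff₀ hnorm, mul_comm] at this
  obtain ⟨K, -, hK⟩ := q.exists_le_mul_norm
  by_contra! h
  choose u hu1 hqu using fun j : ℕ => h (1 / (j + 1)) Nat.one_div_pos_of_nat
  obtain ⟨x, hx, σ, hσ, hux⟩ := (isCompact_sphere (0 : ι → ℝ) 1).tendsto_subseq
    (fun j => mem_sphere_zero_iff_norm.mpr (hu1 j))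
  have hqux : Tendsto (fun j => q.toFun (u (σ j))) atTop (𝓝 0) :=
    squeeze_zero (fun j => q.nonneg _) (fun j => (hqu (σ j)).le)
      (tendsto_one_div_add_atTop_nhds_zero_nat.comp hσ.tendsto_atTop)
  simp [q.eq_zero_of_tendsto hK hux hqux] at hx

end Coordinates

theorem exists_bound_of_le_one [FiniteDimensional ℝ X] (p q : QuasiNorm X) :
    ∃ M, ∀ x, p.toFun x ≤ 1 → q.toFun x ≤ M := by
  let e := (Module.finBasis ℝ X).equivFun.symm
  obtain ⟨δ, hδ, hp⟩ := (p.comap e.toLinearMap e.injective).exists_pos_mul_norm_le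
  obtain ⟨K, hK, hq⟩ := (q.comap e.toLinearMap e.injective).exists_le_mul_norm
  refine ⟨K / δ, fun x hx => ?_⟩
  obtain ⟨v, rfl⟩ := e.surjective x
  have hv : ‖v‖ ≤ 1 / δ := by
    rw [le_div_iff₀ hδ, mul_comm]
    exact (hp v).trans hx
  calc q.toFun (e v) ≤ K * ‖v‖ := hq v
    _ ≤ K * (1 / δ) := by gcongr
    _ = K / δ := by ring

theorem apply_le_sSup_mul [FiniteDimensional ℝ X] (p : QuasiNorm X) (q : QuasiNorm Y)
    (T : X →ₗ[ℝ] Y) (hT : Function.Injective T) (F : Submodule ℝ X) {x : X} (hx : x ∈ F) :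
    q.toFun (T x) ≤ sSup {s | ∃ x ∈ F, p.toFun x ≤ 1 ∧ s = q.toFun (T x)} * p.toFun x := by
  set c := sSup {s | ∃ x ∈ F, p.toFun x ≤ 1 ∧ s = q.toFun (T x)}
  obtain ⟨M, hM⟩ := p.exists_bound_of_le_one (q.comap T hT)
  rcases (p.nonneg x).eq_or_lt with hpx | hpx
  · rw [(p.eq_zero_iff x).mp hpx.symm, T.map_zero, q.map_zero, p.map_zero, mul_zero]
  have hscaled : p.toFun ((p.toFun x)⁻¹ • x) ≤ 1 := by
    rw [p.smul, abs_of_pos (inv_pos.mpr hpx), inv_mul_cancel₀ hpx.ne']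
  have hle : (p.toFun x)⁻¹ * q.toFun (T x) ≤ c := by
    rw [← abs_of_pos (inv_pos.mpr hpx), ← q.smul, ← T.map_smul]
    exact le_csSup ⟨M, by rintro s ⟨y, -, hy, rfl⟩; exact hM y hy⟩
      ⟨_, F.smul_mem _ hx, hscaled, rfl⟩
  rwa [inv_mul_le_iff₀ hpx, mul_comm] at hle

end QuasiNorm

section OperatorNorm

variable {X Y : Type*} {nX : X → ℝ} {nY : Y → ℝ} {T : X → Y}

theorem opN_nonneg (h : ∀ y, 0 ≤ nY y) : 0 ≤ opN nX nY T :=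
  Real.sSup_nonneg (by rintro r ⟨x, -, rfl⟩; exact h _)

theorem opN_le {M : ℝ} (hM : 0 ≤ M) (h : ∀ x, nX x ≤ 1 → nY (T x) ≤ M) : opN nX nY T ≤ M :=
  Real.sSup_le (by rintro r ⟨x, hx, rfl⟩; exact h x hx) hM

/-- An unbounded supremum would be `0`, so a positive `opN` is a genuine bound. -/
theorem le_opN_of_pos (h : 0 < opN nX nY T) {x : X} (hx : nX x ≤ 1) : nY (T x) ≤ opN nX nY T := by
  refine le_csSup ?_ ⟨x, hx, rfl⟩
  by_contra hbdd
  rw [opN, Real.sSup_of_not_bddAbove hbdd] at h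
  exact h.false

end OperatorNorm

theorem gelfandN_nonneg {X Y : Type*} [AddCommGroup X] [Module ℝ X] [AddCommGroup Y] [Module ℝ Y]
    {nX : X → ℝ} {nY : Y → ℝ} (h : ∀ y, 0 ≤ nY y) {T : X →ₗ[ℝ] Y} {n : ℕ} :
    0 ≤ gelfandN nX nY T n :=
  Real.sInf_nonneg <| by
    rintro r ⟨F, -, rfl⟩
    exact Real.sSup_nonneg (by rintro s ⟨x, -, -, rfl⟩; exact h _)

section BanachMazur

variable {Z : Type*} [AddCommGroup Z] [Module ℝ Z]

theorem distToEuclidean_nonneg {nZ : Z → ℝ} (h : ∀ z, 0 ≤ nZ z) (k : ℕ) :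
    0 ≤ distToEuclidean nZ k :=
  Real.sInf_nonneg <| by
    rintro r ⟨φ, rfl⟩
    exact mul_nonneg (opN_nonneg fun v => norm_nonneg v) (opN_nonneg h)

theorem distToEuclidean_le {nZ : Z → ℝ} (h : ∀ z, 0 ≤ nZ z) {k : ℕ}
    (φ : Z ≃ₗ[ℝ] EuclideanSpace ℝ (Fin k)) :
    distToEuclidean nZ k ≤ opN nZ (fun v => ‖v‖) φ * opN (fun v => ‖v‖) nZ φ.symm :=
  csInf_le ⟨0, by
    rintro r ⟨ψ, rfl⟩
    exact mul_nonneg (opN_nonneg fun v => norm_nonneg v) (opN_nonneg h)⟩ ⟨φ, rfl⟩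

theorem exists_linearEquiv_euclideanSpace_norm_eq {W : Type*} [NormedAddCommGroup W]
    [InnerProductSpace ℝ W] [FiniteDimensional ℝ W] (ψ : Z →ₗ[ℝ] W) (hψ : Function.Injective ψ)
    {k : ℕ} (hk : Module.finrank ℝ Z = k) :
    ∃ φ : Z ≃ₗ[ℝ] EuclideanSpace ℝ (Fin k), ∀ z, ‖φ z‖ = ‖ψ z‖ := by
  let e := LinearEquiv.ofInjective ψ hψ
  have hrange : Module.finrank ℝ (LinearMap.range ψ) = k := e.finrank_eq.symm.trans hk
  let b := (stdOrthonormalBasis ℝ (LinearMap.range ψ)).reindex (finCongr hrange)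
  refine ⟨e.trans b.repr.toLinearEquiv, fun z => ?_⟩
  simp [e, LinearEquiv.ofInjective_apply]

end BanachMazur

theorem Submodule.exists_le_finrank_eq {K V : Type*} [DivisionRing K] [AddCommGroup V]
    [Module K V] [FiniteDimensional K V] (F : Submodule K V) {k : ℕ}
    (hk : k ≤ Module.finrank K F) : ∃ F₀ ≤ F, Module.finrank K F₀ = k := by
  let b := Module.finBasis K F
  let w : Fin k → V := fun i => b (Fin.castLE hk i)
  have hw : LinearIndependent K w :=
    (b.linearIndependent.comp _ (Fin.castLE_injective hk)).map' F.subtype F.ker_subtype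
  refine ⟨Submodule.span K (Set.range w), ?_, by rw [finrank_span_eq_card hw, Fintype.card_fin]⟩
  exact Submodule.span_le.mpr (by rintro _ ⟨i, rfl⟩; exact (b _).2)

section Factorization

variable {X Y W : Type*} [AddCommGroup X] [Module ℝ X] [AddCommGroup Y] [Module ℝ Y]
  [NormedAddCommGroup W] [InnerProductSpace ℝ W] [FiniteDimensional ℝ W]

theorem distToEuclidean_map_le (nX : QuasiNorm X) (nY : QuasiNorm Y) (T : X ≃ₗ[ℝ] Y)
    (A : Y →ₗ[ℝ] W) (B : W →ₗ[ℝ] X) (hfact : (T.symm : Y →ₗ[ℝ] X) = B ∘ₗ A)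
    (hA : 0 < opN nY.toFun (fun w => ‖w‖) A) (hB : 0 < opN (fun w : W => ‖w‖) nX.toFun B)
    {F : Submodule ℝ X} {k : ℕ} (hF : Module.finrank ℝ F = k) {c : ℝ} (hc0 : 0 ≤ c)
    (hc : ∀ x ∈ F, nY.toFun (T x) ≤ c * nX.toFun x) :
    distToEuclidean (fun y : F.map (T : X →ₗ[ℝ] Y) => nY.toFun y) k ≤
      opN nY.toFun (fun w => ‖w‖) A * (opN (fun w : W => ‖w‖) nX.toFun B * c) := by
  set E := F.map (T : X →ₗ[ℝ] Y)
  have hBA : ∀ y, B (A y) = T.symm y := fun y => by rw [← LinearMap.comp_apply, ← hfact]; rfl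
  have hAinj : Function.Injective A := fun y₁ y₂ h => T.symm.injective <| by rw [← hBA, ← hBA, h]
  obtain ⟨φ, hφ⟩ := exists_linearEquiv_euclideanSpace_norm_eq (A ∘ₗ E.subtype)
    (hAinj.comp Subtype.val_injective) (by rw [LinearEquiv.finrank_map_eq, hF])
  refine (distToEuclidean_le (fun _ => nY.nonneg _) φ).trans <|
    mul_le_mul ?_ ?_ (opN_nonneg fun _ => nY.nonneg _) hA.le
  · exact opN_le hA.le fun y hy => (hφ y).trans_le (le_opN_of_pos hA hy)
  · refine opN_le (mul_nonneg hB.le hc0) fun v hv => ?_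
    obtain ⟨x, hxF, hxy⟩ := (φ.symm v).2
    have hAy : ‖A (φ.symm v)‖ ≤ 1 := by
      have h := hφ (φ.symm v)
      rw [φ.apply_symm_apply] at h
      exact h.symm.trans_le hv
    have hx : nX.toFun x ≤ opN (fun w : W => ‖w‖) nX.toFun B := by
      simpa [hBA, ← hxy] using le_opN_of_pos hB hAy
    calc nY.toFun (φ.symm v : Y) = nY.toFun (T x) := by rw [← hxy]; rfl
      _ ≤ c * nX.toFun x := hc x hxF
      _ ≤ c * opN (fun w : W => ‖w‖) nX.toFun B := by gcongr
      _ = _ := mul_comm _ _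

end Factorization

theorem gelfand_lower_factorization_general
    {X Y : Type*} [AddCommGroup X] [Module ℝ X] [AddCommGroup Y] [Module ℝ Y]
    (nX : QuasiNorm X) (nY : QuasiNorm Y)
    (m : ℕ)
    (hdimX : Module.finrank ℝ X = m)
    (T : X ≃ₗ[ℝ] Y)
    (A : Y →ₗ[ℝ] EuclideanSpace ℝ (Fin m)) (B : EuclideanSpace ℝ (Fin m) →ₗ[ℝ] X)
    (hfact : (T.symm : Y →ₗ[ℝ] X) = B ∘ₗ A)
    (n : ℕ) (hn1 : 1 ≤ n) (hnm : n ≤ m) :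
    (1 / (opN nY.toFun (fun v => ‖v‖) A *
          opN (fun v : EuclideanSpace ℝ (Fin m) => ‖v‖) nX.toFun B)) *
      sInf {d : ℝ | ∃ E : Submodule ℝ Y, Module.finrank ℝ E = m - n + 1 ∧
        d = distToEuclidean (fun x : E => nY.toFun (x : Y)) (m - n + 1)}
      ≤ gelfandN nX.toFun nY.toFun (T : X →ₗ[ℝ] Y) n := by
  have : FiniteDimensional ℝ X := Module.finite_of_finrank_pos (by omega)
  set a := opN nY.toFun (fun v : EuclideanSpace ℝ (Fin m) => ‖v‖) A
  set b := opN (fun v : EuclideanSpace ℝ (Fin m) => ‖v‖) nX.toFun B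
  set S := {d : ℝ | ∃ E : Submodule ℝ Y, Module.finrank ℝ E = m - n + 1 ∧
    d = distToEuclidean (fun x : E => nY.toFun (x : Y)) (m - n + 1)}
  have ha : 0 ≤ a := opN_nonneg fun v => norm_nonneg v
  have hb : 0 ≤ b := opN_nonneg nX.nonneg
  rcases (mul_nonneg ha hb).eq_or_lt with hab | hab
  · rw [← hab, div_zero, zero_mul]
    exact gelfandN_nonneg nY.nonneg
  refine le_csInf ⟨_, ⊤, by rw [finrank_top]; omega, rfl⟩ ?_
  rintro _ ⟨F, hF, rfl⟩
  set c := sSup {s | ∃ x ∈ F, nX.toFun x ≤ 1 ∧ s = nY.toFun (T x)}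
  obtain ⟨F₀, hF₀F, hF₀⟩ := F.exists_le_finrank_eq (k := m - n + 1)
    (by have := Submodule.finrank_le F; omega)
  have hc : ∀ x ∈ F₀, nY.toFun (T x) ≤ c * nX.toFun x := fun x hx =>
    nX.apply_le_sSup_mul nY (T : X →ₗ[ℝ] Y) T.injective F (hF₀F hx)
  have hc0 : 0 ≤ c := Real.sSup_nonneg (by rintro s ⟨x, -, -, rfl⟩; exact nY.nonneg _)
  rw [one_div, inv_mul_le_iff₀ hab]
  calc sInf S ≤ distToEuclidean (fun y : F₀.map (T : X →ₗ[ℝ] Y) => nY.toFun y) (m - n + 1) :=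
        csInf_le ⟨0, by rintro _ ⟨E, -, rfl⟩; exact distToEuclidean_nonneg (fun _ => nY.nonneg _) _⟩
          ⟨_, by rw [LinearEquiv.finrank_map_eq, hF₀], rfl⟩
    _ ≤ a * (b * c) := distToEuclidean_map_le nX nY T A B hfact
        (pos_of_mul_pos_left hab hb) (pos_of_mul_pos_right hab ha) hF₀ hc0 hc
    _ = a * b * c := by ring

/-- **Lower bound for Gelfand numbers via factorization through Hilbert space
(quasi-Banach version).** Let `X, Y` be `m`-dimensional quasi-Banach spaces,
`T : X → Y` an invertible linear operator with `T⁻¹ = B ∘ A` for linear maps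
`A : Y → ℓ₂^m`, `B : ℓ₂^m → X`. Then for all `n ≤ m`,
`c_n(T) ≥ (1/(‖A‖‖B‖)) · inf { d(E, ℓ₂^{m-n+1}) : E ⊂ Y, dim E = m-n+1 }`. -/
theorem gelfand_lower_factorization
    {X Y : Type*} [AddCommGroup X] [Module ℝ X] [AddCommGroup Y] [Module ℝ Y]
    (nX : QuasiNorm X) (nY : QuasiNorm Y)
    (m : ℕ) (hm : 0 < m)
    (hdimX : Module.finrank ℝ X = m) (hdimY : Module.finrank ℝ Y = m)
    (T : X ≃ₗ[ℝ] Y)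
    (A : Y →ₗ[ℝ] EuclideanSpace ℝ (Fin m)) (B : EuclideanSpace ℝ (Fin m) →ₗ[ℝ] X)
    (hfact : (T.symm : Y →ₗ[ℝ] X) = B ∘ₗ A)
    (n : ℕ) (hn1 : 1 ≤ n) (hnm : n ≤ m) :
    (1 / (opN nY.toFun (fun v => ‖v‖) A *
          opN (fun v : EuclideanSpace ℝ (Fin m) => ‖v‖) nX.toFun B)) *
      sInf {d : ℝ | ∃ E : Submodule ℝ Y, Module.finrank ℝ E = m - n + 1 ∧
        d = distToEuclidean (fun x : E => nY.toFun (x : Y)) (m - n + 1)}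
      ≤ gelfandN nX.toFun nY.toFun (T : X →ₗ[ℝ] Y) n :=
  gelfand_lower_factorization_general nX nY m hdimX T A B hfact n hn1 hnm
end
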